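/- Let V be a complex vector space equipped with two commuting linear operators ∂ and ∂̄ on a graded space satisfying ∂² = ∂̄² = 0 and ∂∂̄ = -∂̄∂. Suppose the ∂∂̄-lemma holds: ker ∂ ∩ Im ∂̄ = Im(∂∂̄) = ker ∂̄ ∩ Im ∂. Let α be a fixed element with ∂̄-degree 1 satisfying ∂̄α = 0 and α ∧ α = 0 (i.e. left wedge by α squares to zero and commutes appropriately), acting as a linear operator A on V with A∂̄ = -∂̄A and A∂ = -∂A and A(Im ∂) ⊆ Im ∂. Given u₀ with ∂̄u₀ = 0 and ∂u₀ = 0 such that A u₀ ∈ Im ∂̄, there exists a sequence (u_i)_{i≥1} in Im ∂ such that ∂̄ u_{i+1} + A u_i = 0 for all i ≥ 0. -/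

import Mathlib

/-!
The ∂∂̄-lemma turns the invariant `A v ∈ Im (∂∂̄)` into its own successor: writing
`A v = ∂∂̄ w` and `v' := ∂ w`, one gets `∂̄ v' + A v = 0`, and `A v'` is `∂̄`-closed
(as `∂̄ A v' = -A ∂̄ ∂ w = A A v = 0`) and `∂`-exact, hence again in `Im (∂∂̄)`.
The first-order hypothesis starts the induction, since `A u₀` is `∂`-closed and `∂̄`-exact.
-/

theorem exists_seq_of_forall_exists {α : Type*} (P : α → Prop) (r : α → α → Prop)
    (h : ∀ a, P a → ∃ b, P b ∧ r a b) (a₀ : α) (ha₀ : P a₀) :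
    ∃ u : ℕ → α, u 0 = a₀ ∧ ∀ n, r (u n) (u (n + 1)) := by
  choose g hgP hgr using h
  let step : {a // P a} → {a // P a} := fun a => ⟨g a.1 a.2, hgP a.1 a.2⟩
  refine ⟨fun n => (step^[n] ⟨a₀, ha₀⟩).1, rfl, fun n => ?_⟩
  simp only [Function.iterate_succ_apply']
  exact hgr _ _

namespace LinearMap

variable {R V : Type*} [Semiring R] [AddCommGroup V] [Module R V]

theorem apply_apply_eq_neg_of_comp_add_comp_eq_zero {f g : V →ₗ[R] V}
    (h : f ∘ₗ g + g ∘ₗ f = 0) (x : V) : f (g x) = -g (f x) :=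
  eq_neg_of_add_eq_zero_left (by simpa using DFunLike.congr_fun h x)

variable {p q A : V →ₗ[R] V}

theorem apply_mem_range_comp_of_mem_ker
    (hlem : ker p ⊓ range q = range (p ∘ₗ q)) (hAp : A ∘ₗ p + p ∘ₗ A = 0)
    {u : V} (hu : p u = 0) (hAu : A u ∈ range q) : A u ∈ range (p ∘ₗ q) := by
  refine hlem ▸ ⟨?_, hAu⟩
  show p (A u) = 0
  rw [← neg_eq_zero, ← apply_apply_eq_neg_of_comp_add_comp_eq_zero hAp, hu, map_zero]

theorem exists_mem_range_add_apply_eq_zero (hpq : p ∘ₗ q + q ∘ₗ p = 0)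
    (hlem : ker q ⊓ range p = range (p ∘ₗ q)) (hA2 : A ∘ₗ A = 0)
    (hAq : A ∘ₗ q + q ∘ₗ A = 0) (hAim : ∀ v ∈ range p, A v ∈ range p)
    {v : V} (hv : A v ∈ range (p ∘ₗ q)) :
    ∃ w ∈ range p, q w + A v = 0 ∧ A w ∈ range (p ∘ₗ q) := by
  obtain ⟨w, hw⟩ := hv
  have hqpw : q (p w) = -A v := by
    rw [← hw, comp_apply, apply_apply_eq_neg_of_comp_add_comp_eq_zero hpq, neg_neg]
  have hAAv : A (A v) = 0 := by simpa using DFunLike.congr_fun hA2 v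
  have hqApw : q (A (p w)) = 0 := by
    rw [← neg_eq_zero, ← apply_apply_eq_neg_of_comp_add_comp_eq_zero hAq, hqpw, map_neg,
      hAAv, neg_zero]
  refine ⟨p w, mem_range_self p w, by rw [hqpw, neg_add_cancel], hlem ▸ ⟨hqApw, ?_⟩⟩
  exact hAim _ (mem_range_self p w)

end LinearMap

theorem stmt_5_general {V : Type*} [AddCommGroup V] [Module ℂ V]
    (p q A : V →ₗ[ℂ] V)
    (hpq : p ∘ₗ q + q ∘ₗ p = 0)
    (hlem1 : LinearMap.ker p ⊓ LinearMap.range q = LinearMap.range (p ∘ₗ q))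
    (hlem2 : LinearMap.ker q ⊓ LinearMap.range p = LinearMap.range (p ∘ₗ q))
    (hA2 : A ∘ₗ A = 0)
    (hAq : A ∘ₗ q + q ∘ₗ A = 0) (hAp : A ∘ₗ p + p ∘ₗ A = 0)
    (hAim : ∀ v ∈ LinearMap.range p, A v ∈ LinearMap.range p)
    (u₀ : V) (h0p : p u₀ = 0)
    (h0A : A u₀ ∈ LinearMap.range q) :
    ∃ u : ℕ → V, u 0 = u₀ ∧ (∀ i, 1 ≤ i → u i ∈ LinearMap.range p) ∧
      (∀ i, q (u (i + 1)) + A (u i) = 0) := by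
  obtain ⟨u, hu0, hu⟩ := exists_seq_of_forall_exists (fun v => A v ∈ LinearMap.range (p ∘ₗ q))
    (fun v w => w ∈ LinearMap.range p ∧ q w + A v = 0)
    (fun v hv => by
      obtain ⟨w, hwp, hw, hAw⟩ :=
        LinearMap.exists_mem_range_add_apply_eq_zero hpq hlem2 hA2 hAq hAim hv
      exact ⟨w, hAw, hwp, hw⟩)
    u₀ (LinearMap.apply_mem_range_comp_of_mem_ker hlem1 hAp h0p h0A)
  refine ⟨u, hu0, fun i hi => ?_, fun i => (hu i).2⟩
  obtain ⟨n, rfl⟩ := Nat.exists_eq_add_of_le' hi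
  exact (hu n).1

/-- formal Green–Lazarsfeld extension.  On a space with commuting
square-zero differentials `p` (= ∂) and `q` (= ∂̄) satisfying the ∂∂̄-lemma
`ker p ∩ Im q = Im (p∘q) = ker q ∩ Im p`, and `A` (= wedge with the closed
(0,1)-form α) with `A² = 0`, anticommuting with `p, q` and preserving `Im p`:
if `u₀` is `p`- and `q`-closed and `A u₀` is `q`-exact (extension to first order),
then one can solve the whole system `q u_{i+1} + A u_i = 0` with `u_i ∈ Im p`. -/
theorem stmt_5 {V : Type*} [AddCommGroup V] [Module ℂ V]
    (p q A : V →ₗ[ℂ] V)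
    (hp : p ∘ₗ p = 0) (hq : q ∘ₗ q = 0) (hpq : p ∘ₗ q + q ∘ₗ p = 0)
    (hlem1 : LinearMap.ker p ⊓ LinearMap.range q = LinearMap.range (p ∘ₗ q))
    (hlem2 : LinearMap.ker q ⊓ LinearMap.range p = LinearMap.range (p ∘ₗ q))
    (hA2 : A ∘ₗ A = 0)
    (hAq : A ∘ₗ q + q ∘ₗ A = 0) (hAp : A ∘ₗ p + p ∘ₗ A = 0)
    (hAim : ∀ v ∈ LinearMap.range p, A v ∈ LinearMap.range p)
    (u₀ : V) (h0q : q u₀ = 0) (h0p : p u₀ = 0)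
    (h0A : A u₀ ∈ LinearMap.range q) :
    ∃ u : ℕ → V, u 0 = u₀ ∧ (∀ i, 1 ≤ i → u i ∈ LinearMap.range p) ∧
      (∀ i, q (u (i + 1)) + A (u i) = 0) :=
  stmt_5_general p q A hpq hlem1 hlem2 hA2 hAq hAp hAim u₀ h0p h0A
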